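/- arXiv:1804.01858 — 4 statements merged into one kernel-verified Lean document; each statement's English description precedes it below -/
import Mathlib

section
/- Let H be a separable real Hilbert space, let (P_n) be a sequence of Borel probability measures on H converging weakly to a Borel probability measure P, and assume P satisfies H1. Then sup_{y ∈ H} ‖∫_H g_y dP_n − ∫_H g_y dP‖ → 0 as n → ∞, where the integrals are Bochner integrals. Equivalently, the depth functions converge uniformly: sup_{y ∈ H} |D(y, P_n) − D(y, P)| → 0. -/
/-!
Cut `g_y` off inside the ball of radius `r` about `y`: the result is bounded by `1` and
`2/r`-Lipschitz, uniformly in `y`, and it differs from `g_y` only on that ball, where the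
difference has norm at most `2`. On a separable space weak convergence is convergence in the
Lévy–Prokhorov metric, and a Lévy–Prokhorov distance below `δ` moves integrals of bounded
Lipschitz maps by `O(δ)` and masses of balls by at most `δ` (after enlarging the radius by `δ`).
H1 makes `P` atomless, and an atomless finite measure gives uniformly small mass to all balls of
a small enough radius, so all error terms are small uniformly in `y`.
-/

open MeasureTheory Filter Topology

/-- The direction function `g_y(z) = (z - y)/‖z - y‖` (with `g_y(y) = 0`). -/
noncomputable def gdir {H : Type*} [NormedAddCommGroup H] [InnerProductSpace ℝ H]
    (y z : H) : H := ‖z - y‖⁻¹ • (z - y)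

/-- The depth of `y` with respect to a measure `Q`: `D(y, Q) = 1 - ‖∫ g_y dQ‖`. -/
noncomputable def depth {H : Type*} [NormedAddCommGroup H] [InnerProductSpace ℝ H]
    [MeasurableSpace H] (y : H) (Q : Measure H) : ℝ :=
  1 - ‖∫ z, gdir y z ∂Q‖

open Metric Set BoundedContinuousFunction

section LevyProkhorov

variable {Ω : Type*} [MeasurableSpace Ω] [PseudoMetricSpace Ω] [OpensMeasurableSpace Ω]

lemma MeasureTheory.ProbabilityMeasure.eventually_levyProkhorovEDist_lt_of_tendsto
    [TopologicalSpace.SeparableSpace Ω] {ι : Type*} {l : Filter ι}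
    {Pn : ι → ProbabilityMeasure Ω} {P : ProbabilityMeasure Ω} (h : Tendsto Pn l (𝓝 P))
    {δ : ℝ} (hδ : 0 < δ) :
    ∀ᶠ n in l, levyProkhorovEDist (Pn n : Measure Ω) P < ENNReal.ofReal δ := by
  have := (LevyProkhorov.probabilityMeasureHomeomorph.continuous.tendsto P).comp h
  filter_upwards [Metric.tendsto_nhds.mp this δ hδ] with n hn
  rwa [ENNReal.lt_ofReal_iff_toReal_lt (levyProkhorovEDist_ne_top _ _)]

lemma measureReal_closedBall_le_of_levyProkhorovEDist_lt {μ ν : Measure Ω} [IsFiniteMeasure ν]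
    {ε : ℝ} (hε : 0 ≤ ε) (hμν : levyProkhorovEDist μ ν < ENNReal.ofReal ε) (y : Ω) (r : ℝ) :
    μ.real (closedBall y r) ≤ ν.real (closedBall y (r + ε)) + ε := by
  have thickening_subset : thickening ε (closedBall y r) ⊆ closedBall y (r + ε) := by
    intro z hz
    obtain ⟨w, hw, hzw⟩ := mem_thickening_iff.mp hz
    exact (dist_triangle z w y).trans (by rw [mem_closedBall] at hw; linarith)
  have h := left_measure_le_of_levyProkhorovEDist_lt hμν
    (measurableSet_closedBall (x := y) (ε := r))
  rw [ENNReal.toReal_ofReal hε] at h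
  replace h := h.trans (add_le_add_left (measure_mono thickening_subset) _)
  refine (ENNReal.toReal_mono (by finiteness) h).trans_eq ?_
  rw [ENNReal.toReal_add (measure_ne_top _ _) ENNReal.ofReal_ne_top, ENNReal.toReal_ofReal hε]
  rfl

lemma BoundedContinuousFunction.integral_le_integral_add_of_levyProkhorovEDist_lt
    {μ ν : Measure Ω} [IsFiniteMeasure μ] [IsProbabilityMeasure ν] {ε : ℝ} (hε : 0 < ε)
    (hμν : levyProkhorovEDist μ ν < ENNReal.ofReal ε) (f : Ω →ᵇ ℝ) (f_nn : 0 ≤ f)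
    {K : NNReal} (hf : LipschitzWith K f) :
    ∫ x, f x ∂μ ≤ ∫ x, f x ∂ν + ε * (K + ‖f‖) := by
  -- The `ε`-thickening of `{t ≤ f}` lies in `{t ≤ f + c}`; the layer-cake formula for the
  -- nonnegative function `f + c` then absorbs the shift `c`.
  set c := (K : ℝ) * ε
  have hc : 0 ≤ c := by positivity
  have thickening_subset (t : ℝ) : thickening ε {a | t ≤ f a} ⊆ {a | t ≤ f a + c} := by
    intro x hx
    obtain ⟨z, hz, hxz⟩ := mem_thickening_iff.mp hx
    have hfzx : dist (f z) (f x) ≤ c :=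
      (hf.dist_le_mul z x).trans (mul_le_mul_of_nonneg_left (dist_comm x z ▸ hxz.le) K.2)
    rw [Real.dist_eq] at hfzx
    exact (mem_ofPred_eq ▸ hz).trans (by linarith [le_abs_self (f z - f x)])
  have intble_of_antitone {g : ℝ → ℝ} (hg : Antitone g) (b : ℝ) : IntegrableOn g (Ioc 0 b) :=
    ((hg.antitoneOn _).integrableOn_isCompact isCompact_Icc).mono_set Ioc_subset_Icc_self
  have thick_intble := intble_of_antitone (g := fun t ↦ ν.real (thickening ε {a | t ≤ f a}))
    (fun s t hst ↦ measureReal_mono (thickening_subset_of_subset ε fun a ha ↦ hst.trans ha)) ‖f‖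
  have shifted_intble (b : ℝ) := intble_of_antitone (g := fun t ↦ ν.real {a | t ≤ f a + c})
    (fun s t hst ↦ measureReal_mono fun a ha ↦ hst.trans ha) b
  have layer_cake : ∫ x, f x + c ∂ν = ∫ t in Ioc 0 (‖f‖ + c), ν.real {a | t ≤ f a + c} :=
    ((f.integrable ν).add (integrable_const c)).integral_eq_integral_Ioc_meas_le
      (ae_of_all _ fun x ↦ add_nonneg (f_nn x) hc)
      (ae_of_all _ fun x ↦ add_le_add_left (f.apply_le_norm x) c)
  calc ∫ x, f x ∂μ
      ≤ (∫ t in Ioc 0 ‖f‖, ν.real (thickening ε {a | t ≤ f a})) + ε * ‖f‖ :=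
        f.integral_le_of_levyProkhorovEDist_lt μ ν hε hμν (ae_of_all _ f_nn)
    _ ≤ (∫ t in Ioc 0 ‖f‖, ν.real {a | t ≤ f a + c}) + ε * ‖f‖ :=
        add_le_add_left (setIntegral_mono_on thick_intble (shifted_intble _)
          measurableSet_Ioc fun t _ ↦ measureReal_mono (thickening_subset t)) _
    _ ≤ (∫ t in Ioc 0 (‖f‖ + c), ν.real {a | t ≤ f a + c}) + ε * ‖f‖ :=
        add_le_add_left (setIntegral_mono_set (shifted_intble _)
          (ae_of_all _ fun _ ↦ measureReal_nonneg)
          (Ioc_subset_Ioc_right (by linarith)).eventuallyLE) _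
    _ = ∫ x, f x ∂ν + ε * (K + ‖f‖) := by
        rw [← layer_cake, integral_add (f.integrable ν) (integrable_const c)]
        simp only [integral_const, probReal_univ, one_smul, c]
        ring

lemma norm_integral_sub_integral_le_of_levyProkhorovEDist_lt {E : Type*} [NormedAddCommGroup E]
    [NormedSpace ℝ E] [CompleteSpace E] [SecondCountableTopologyEither Ω E]
    {μ ν : Measure Ω} [IsProbabilityMeasure μ] [IsProbabilityMeasure ν] {ε : ℝ} (hε : 0 < ε)
    (hμν : levyProkhorovEDist μ ν < ENNReal.ofReal ε) {F : Ω → E} {K : NNReal}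
    (hF : LipschitzWith K F) (hF_le : ∀ z, ‖F z‖ ≤ 1) :
    ‖∫ z, F z ∂μ - ∫ z, F z ∂ν‖ ≤ ε * (K + 2) := by
  -- Test against `g ∘ F + 1` for a norming functional `g` of the difference.
  obtain ⟨g, hg1, hg⟩ := exists_dual_vector'' ℝ (∫ z, F z ∂μ - ∫ z, F z ∂ν)
  have hgF (z : Ω) : |g (F z)| ≤ 1 := (g.le_of_opNorm_le hg1 (F z)).trans (by simpa using hF_le z)
  have hgF_add (z : Ω) : ‖g (F z) + 1‖ ≤ 2 := by
    rw [Real.norm_eq_abs, abs_le]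
    constructor <;> linarith [abs_le.mp (hgF z)]
  let f : Ω →ᵇ ℝ := .ofNormedAddCommGroup (fun z ↦ g (F z) + 1)
    ((g.continuous.comp hF.continuous).add continuous_const) 2 hgF_add
  have f_nn : 0 ≤ f := fun z ↦ by
    change 0 ≤ g (F z) + 1
    linarith [abs_le.mp (hgF z)]
  have f_lip : LipschitzWith K f := .of_dist_le_mul fun a b ↦ by
    change dist (g (F a) + 1) (g (F b) + 1) ≤ _
    rw [dist_add_right, dist_eq_norm, ← map_sub]
    exact (g.le_of_opNorm_le hg1 _).trans
      (by rw [one_mul, ← dist_eq_norm]; exact hF.dist_le_mul a b)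
  have integral_f (κ : Measure Ω) [IsProbabilityMeasure κ] :
      ∫ z, f z ∂κ = g (∫ z, F z ∂κ) + 1 := by
    have hF_int : Integrable F κ :=
      .of_bound hF.continuous.aestronglyMeasurable 1 (ae_of_all _ hF_le)
    change ∫ z, (g (F z) + 1) ∂κ = _
    rw [integral_add (g.integrable_comp hF_int) (integrable_const 1),
      g.integral_comp_comm hF_int]
    simp
  calc ‖∫ z, F z ∂μ - ∫ z, F z ∂ν‖ = ∫ z, f z ∂μ - ∫ z, f z ∂ν := by
        rw [integral_f, integral_f]
        simp only [map_sub, RCLike.ofReal_real_eq_id, id] at hg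
        linarith
    _ ≤ ε * (K + ‖f‖) := by
        linarith [f.integral_le_integral_add_of_levyProkhorovEDist_lt hε hμν f_nn f_lip]
    _ ≤ ε * (K + 2) := by gcongr; exact norm_ofNormedAddCommGroup_le _ zero_le_two hgF_add

end LevyProkhorov

lemma le_measure_iInter_iUnion_ge {α : Type*} [MeasurableSpace α] {μ : Measure α}
    [IsFiniteMeasure μ] {s : ℕ → Set α} (hs : ∀ n, MeasurableSet (s n)) {c : ENNReal}
    (hc : ∀ n, c ≤ μ (s n)) :
    c ≤ μ (⋂ m, ⋃ n ≥ m, s n) :=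
  ge_of_tendsto' (tendsto_measure_iInter_atTop
    (fun _ ↦ (MeasurableSet.biUnion (to_countable _) fun n _ ↦ hs n).nullMeasurableSet)
    (fun _ _ hmk ↦ biUnion_subset_biUnion_left fun _ hn ↦ le_trans hmk hn)
    ⟨0, measure_ne_top _ _⟩)
    fun m ↦ (hc m).trans (measure_mono (subset_biUnion_of_mem (u := s) (le_refl m)))

lemma exists_pos_forall_measure_closedBall_lt {Ω : Type*} [MeasurableSpace Ω] [MetricSpace Ω]
    [OpensMeasurableSpace Ω] (μ : Measure Ω) [IsFiniteMeasure μ] [NullSingletonClass μ]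
    {c : ENNReal} (hc : c ≠ 0) :
    ∃ r > 0, ∀ y, μ (closedBall y r) < c := by
  -- Balls `closedBall (y n) (1 / (n + 1))` of mass `≥ c` have a point `x` in infinitely many
  -- of them; these lie in shrinking balls about `x`, whose masses tend to `μ {x} = 0`.
  by_contra! h
  choose y hy using fun n : ℕ ↦ h (1 / (n + 1)) Nat.one_div_pos_of_nat
  obtain ⟨x, hx⟩ : (⋂ m, ⋃ n ≥ m, closedBall (y n) (1 / (n + 1))).Nonempty :=
    nonempty_of_measure_ne_zero
      (ne_bot_of_le_ne_bot hc (le_measure_iInter_iUnion_ge (fun _ ↦ measurableSet_closedBall) hy))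
  have ball_x_small : ∀ᶠ n : ℕ in atTop, μ (closedBall x (2 * (1 / (n + 1)))) < c := by
    have hδ : Tendsto (fun n : ℕ ↦ 2 * (1 / ((n : ℝ) + 1))) atTop (𝓝 0) := by
      simpa using tendsto_one_div_add_atTop_nhds_zero_nat.const_mul (2 : ℝ)
    have hball := (tendsto_measure_cthickening_of_isClosed ⟨1, one_pos, measure_ne_top μ _⟩
      (isClosed_singleton (x := x))).comp hδ
    rw [measure_singleton] at hball
    filter_upwards [hball.eventually (gt_mem_nhds (pos_iff_ne_zero.mpr hc))] with n hn
    rwa [← cthickening_singleton x (by positivity)]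
  obtain ⟨N, hN⟩ := ball_x_small.exists_forall_of_atTop
  obtain ⟨n, hn, hxn⟩ := mem_iUnion₂.mp (mem_iInter.mp hx N)
  refine (hy n).not_gt ((measure_mono fun z hz ↦ ?_).trans_lt (hN n hn))
  rw [mem_closedBall] at hz hxn ⊢
  linarith [dist_triangle z (y n) x, dist_comm x (y n)]

lemma MeasureTheory.NullSingletonClass.of_measure_norm_sub_eq_zero {E : Type*} [NormedAddCommGroup E]
    [Nontrivial E] [MeasurableSpace E] {μ : Measure E}
    (h : ∀ (y : E) (r : ℝ), 0 < r → μ {z | ‖z - y‖ = r} = 0) : NullSingletonClass μ where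
  measure_singleton x := by
    obtain ⟨v, hv⟩ := exists_ne (0 : E)
    refine measure_mono_null (fun z hz ↦ ?_) (h (x - v) ‖v‖ (norm_pos_iff.mpr hv))
    rw [mem_singleton_iff.mp hz, mem_ofPred_eq, sub_sub_cancel]

section TruncDir

variable {E : Type*} [NormedAddCommGroup E] [NormedSpace ℝ E]

noncomputable def truncDir (y : E) (r : ℝ) (z : E) : E := (max r ‖z - y‖)⁻¹ • (z - y)

lemma norm_truncDir_le (y : E) {r : ℝ} (hr : 0 < r) (z : E) : ‖truncDir y r z‖ ≤ 1 := by
  have hM : 0 < max r ‖z - y‖ := lt_max_of_lt_left hr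
  rw [truncDir, norm_smul, norm_inv, Real.norm_of_nonneg hM.le, inv_mul_le_one₀ hM]
  exact le_max_right _ _

lemma norm_truncDir_sub_le (y : E) {r : ℝ} (hr : 0 < r) (a b : E) :
    ‖truncDir y r a - truncDir y r b‖ ≤ 2 / r * ‖a - b‖ := by
  set Ma := max r ‖a - y‖
  set Mb := max r ‖b - y‖
  have hMa : 0 < Ma := lt_max_of_lt_left hr
  have hMb : 0 < Mb := lt_max_of_lt_left hr
  have hMa_inv : Ma⁻¹ ≤ r⁻¹ := inv_anti₀ hr (le_max_left _ _)
  have hM_sub : |Mb - Ma| ≤ ‖a - b‖ := by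
    have h := abs_max_sub_max_le_abs ‖b - y‖ ‖a - y‖ r
    rw [max_comm _ r, max_comm _ r] at h
    refine h.trans ((abs_norm_sub_norm_le _ _).trans_eq ?_)
    rw [← norm_neg]
    congr 1
    abel
  have decomp : truncDir y r a - truncDir y r b =
      Ma⁻¹ • (a - b) + (Ma⁻¹ - Mb⁻¹) • (b - y) := by
    simp only [truncDir, Ma, Mb]
    module
  have second_term : ‖(Ma⁻¹ - Mb⁻¹) • (b - y)‖ ≤ r⁻¹ * ‖a - b‖ := by
    rw [norm_smul, inv_sub_inv hMa.ne' hMb.ne', Real.norm_eq_abs, abs_div,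
      abs_of_pos (mul_pos hMa hMb)]
    calc |Mb - Ma| / (Ma * Mb) * ‖b - y‖ ≤ |Mb - Ma| / (Ma * Mb) * Mb := by
          gcongr; exact le_max_right _ _
      _ = |Mb - Ma| * Ma⁻¹ := by field_simp
      _ ≤ ‖a - b‖ * r⁻¹ := by gcongr
      _ = r⁻¹ * ‖a - b‖ := mul_comm _ _
  calc ‖truncDir y r a - truncDir y r b‖
      ≤ Ma⁻¹ * ‖a - b‖ + r⁻¹ * ‖a - b‖ := by
        rw [decomp]
        refine (norm_add_le _ _).trans (add_le_add (le_of_eq ?_) second_term)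
        rw [norm_smul, Real.norm_of_nonneg (inv_nonneg.mpr hMa.le)]
    _ ≤ r⁻¹ * ‖a - b‖ + r⁻¹ * ‖a - b‖ := by gcongr
    _ = 2 / r * ‖a - b‖ := by ring

lemma lipschitzWith_truncDir (y : E) {r : ℝ} (hr : 0 < r) :
    LipschitzWith (2 / r).toNNReal (truncDir y r) :=
  .of_dist_le_mul fun a b ↦ by
    rw [dist_eq_norm, dist_eq_norm, Real.coe_toNNReal _ (by positivity)]
    exact norm_truncDir_sub_le y hr a b

end TruncDir

section Gdir

variable {H : Type*} [NormedAddCommGroup H] [InnerProductSpace ℝ H]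

lemma norm_gdir_le (y z : H) : ‖gdir y z‖ ≤ 1 := by
  rw [gdir, norm_smul, norm_inv, norm_norm]
  exact inv_mul_le_one

lemma gdir_eq_truncDir_of_lt {y z : H} {r : ℝ} (h : r < ‖z - y‖) : gdir y z = truncDir y r z := by
  rw [gdir, truncDir, max_eq_right h.le]

lemma gdir_of_subsingleton [Subsingleton H] (y z : H) : gdir y z = 0 :=
  Subsingleton.elim _ _

lemma norm_gdir_sub_truncDir_le (y : H) {r : ℝ} (hr : 0 < r) (z : H) :
    ‖gdir y z - truncDir y r z‖ ≤ (closedBall y r).indicator (fun _ ↦ 2) z := by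
  by_cases hz : z ∈ closedBall y r
  · rw [indicator_of_mem hz]
    exact (norm_sub_le _ _).trans (by linarith [norm_gdir_le y z, norm_truncDir_le y hr z])
  · rw [indicator_of_notMem hz, gdir_eq_truncDir_of_lt (by simpa [dist_eq_norm] using hz),
      sub_self, norm_zero]

variable [MeasurableSpace H] [BorelSpace H]

lemma measurable_gdir (y : H) : Measurable (gdir y) :=
  (measurable_id.sub_const y).norm.inv.smul (measurable_id.sub_const y)

variable [SecondCountableTopology H]

lemma integrable_gdir (y : H) (μ : Measure H) [IsFiniteMeasure μ] : Integrable (gdir y) μ :=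
  .of_bound (measurable_gdir y).aestronglyMeasurable 1 (ae_of_all _ (norm_gdir_le y))

lemma norm_integral_gdir_sub_integral_truncDir_le (y : H) {r : ℝ} (hr : 0 < r)
    (μ : Measure H) [IsFiniteMeasure μ] :
    ‖∫ z, gdir y z ∂μ - ∫ z, truncDir y r z ∂μ‖ ≤ 2 * μ.real (closedBall y r) := by
  have truncDir_int : Integrable (truncDir y r) μ :=
    .of_bound (lipschitzWith_truncDir y hr).continuous.aestronglyMeasurable 1
      (ae_of_all _ (norm_truncDir_le y hr))
  rw [← integral_sub (integrable_gdir y μ) truncDir_int, mul_comm, ← smul_eq_mul,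
    ← integral_indicator_const _ measurableSet_closedBall]
  exact norm_integral_le_of_norm_le ((integrable_const 2).indicator measurableSet_closedBall)
    (ae_of_all _ (norm_gdir_sub_truncDir_le y hr))

variable [CompleteSpace H]

lemma norm_integral_gdir_sub_le_of_levyProkhorovEDist_lt {μ ν : Measure H}
    [IsProbabilityMeasure μ] [IsProbabilityMeasure ν] {r δ : ℝ} (hr : 0 < r) (hδ : 0 < δ)
    (hδr : δ ≤ r) (hμν : levyProkhorovEDist μ ν < ENNReal.ofReal δ) (y : H) :
    ‖∫ z, gdir y z ∂μ - ∫ z, gdir y z ∂ν‖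
      ≤ 4 * ν.real (closedBall y (2 * r)) + δ * (2 / r + 4) := by
  have truncation_μ := norm_integral_gdir_sub_integral_truncDir_le y hr μ
  have truncation_ν := norm_integral_gdir_sub_integral_truncDir_le y hr ν
  rw [norm_sub_rev] at truncation_ν
  have truncated := norm_integral_sub_integral_le_of_levyProkhorovEDist_lt hδ hμν
    (lipschitzWith_truncDir y hr) (norm_truncDir_le y hr)
  rw [Real.coe_toNNReal _ (by positivity)] at truncated
  have ball_μ := measureReal_closedBall_le_of_levyProkhorovEDist_lt hδ.le hμν y r
  have ball_ν : ν.real (closedBall y r) ≤ ν.real (closedBall y (2 * r)) :=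
    measureReal_mono (closedBall_subset_closedBall (by linarith))
  have ball_ν' : ν.real (closedBall y (r + δ)) ≤ ν.real (closedBall y (2 * r)) :=
    measureReal_mono (closedBall_subset_closedBall (by linarith))
  linarith [norm_sub_le_norm_sub_add_norm_sub (∫ z, gdir y z ∂μ) (∫ z, truncDir y r z ∂μ)
      (∫ z, gdir y z ∂ν),
    norm_sub_le_norm_sub_add_norm_sub (∫ z, truncDir y r z ∂μ) (∫ z, truncDir y r z ∂ν)
      (∫ z, gdir y z ∂ν)]

theorem tendstoUniformly_integral_gdir {Pn : ℕ → ProbabilityMeasure H} {P : ProbabilityMeasure H}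
    (h : Tendsto Pn atTop (𝓝 P)) [NullSingletonClass (P : Measure H)] :
    TendstoUniformly (fun n y ↦ ∫ z, gdir y z ∂(Pn n : Measure H))
      (fun y ↦ ∫ z, gdir y z ∂(P : Measure H)) atTop := by
  rw [Metric.tendstoUniformly_iff]
  intro ε hε
  obtain ⟨ρ, hρ, hball⟩ := exists_pos_forall_measure_closedBall_lt (P : Measure H)
    (ENNReal.ofReal_pos.mpr (by positivity : 0 < ε / 8)).ne'
  set r := ρ / 2
  have hr : 0 < r := half_pos hρ
  set δ := min r (ε / 2 / (2 / r + 4))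
  have hδ : 0 < δ := lt_min hr (by positivity)
  have hδε : δ * (2 / r + 4) ≤ ε / 2 :=
    (mul_le_mul_of_nonneg_right (min_le_right _ _) (by positivity)).trans_eq
      (div_mul_cancel₀ _ (by positivity))
  filter_upwards [ProbabilityMeasure.eventually_levyProkhorovEDist_lt_of_tendsto h hδ]
    with n hn y
  have hball_y : (P : Measure H).real (closedBall y (2 * r)) < ε / 8 := by
    rw [show 2 * r = ρ by ring, measureReal_def,
      ← ENNReal.lt_ofReal_iff_toReal_lt (measure_ne_top _ _)]
    exact hball y
  rw [dist_comm, dist_eq_norm]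
  linarith [norm_integral_gdir_sub_le_of_levyProkhorovEDist_lt hr hδ (min_le_left _ _) hn y]

end Gdir

theorem stmt9 {H : Type*} [NormedAddCommGroup H] [InnerProductSpace ℝ H]
    [CompleteSpace H] [SecondCountableTopology H] [MeasurableSpace H] [BorelSpace H]
    (Pn : ℕ → ProbabilityMeasure H) (P : ProbabilityMeasure H)
    (hweak : Tendsto Pn atTop (𝓝 P))
    (hH1 : ∀ (y : H) (r : ℝ), 0 < r → (P : Measure H) {z | ‖z - y‖ = r} = 0) :
    TendstoUniformly (fun n y => ∫ z, gdir y z ∂(Pn n : Measure H))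
      (fun y => ∫ z, gdir y z ∂(P : Measure H)) atTop ∧
    TendstoUniformly (fun n y => depth y (Pn n : Measure H))
      (fun y => depth y (P : Measure H)) atTop := by
  have hgdir : TendstoUniformly (fun n y ↦ ∫ z, gdir y z ∂(Pn n : Measure H))
      (fun y ↦ ∫ z, gdir y z ∂(P : Measure H)) atTop := by
    rcases subsingleton_or_nontrivial H with hH | hH
    · simp only [gdir_of_subsingleton, integral_zero]
      exact tendsto_const_nhds.tendstoUniformly_const
    · have := NullSingletonClass.of_measure_norm_sub_eq_zero hH1
      exact tendstoUniformly_integral_gdir hweak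
  exact ⟨hgdir, (uniformContinuous_const.sub uniformContinuous_norm).comp_tendstoUniformly hgdir⟩
end

section
/- (Billingsley–Topsøe, sufficiency) Let H be a separable real Hilbert space, S a Borel subset of H, and F a family of Borel-measurable functions from S to H such that: (i) sup{‖f(z) − f(t)‖ : f ∈ F, z, t ∈ S} < ∞, and (ii) for every ε > 0, lim_{δ → 0⁺} sup_{f ∈ F} P({x ∈ S : ω_f(B(x, δ)) ≥ ε}) = 0, where ω_f(A) = sup{‖f(x) − f(y)‖ : x, y ∈ A} and B(x, δ) is the open ball of radius δ (the sets in (ii) being assumed measurable). Then for every sequence (P_n) of Borel probability measures on S converging weakly to P, sup_{f ∈ F} ‖∫_S f dP_n − ∫_S f dP‖ → 0 as n → ∞, where the integrals are Bochner integrals. -/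
/-!
Given `ε`, condition (ii) yields `δ` with `P {x | ω_{F i}(B(x, δ)) ≥ ε} < η` for all `i`. Cut `S`
into finitely many `P`-continuity sets of diameter `< δ` and a remainder of `P`-mass `< η`; the
cells do not depend on `i`. On a cell where `F i` oscillates by at most `ε`, it is `ε`-close to a
constant, so its integrals over the cell against `Pn n` and `P` differ by at most `ε` times the
masses plus `C` times the difference of the masses. Every other cell of diameter `< δ` lies in
`{x | ω_{F i}(B(x, δ)) ≥ ε}`, so the bad cells have total `P`-mass `< 2η`. Finally, the
portmanteau theorem makes the finitely many differences of cell masses small, uniformly in `i`.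
-/

open MeasureTheory Filter Topology Set Function
open scoped ENNReal

theorem Set.Finite.frontier_biUnion_subset {X ι : Type*} [TopologicalSpace X] {s : Set ι}
    (hs : s.Finite) (f : ι → Set X) : frontier (⋃ i ∈ s, f i) ⊆ ⋃ i ∈ s, frontier (f i) := by
  rintro x ⟨hcl, hint⟩
  rw [hs.closure_biUnion] at hcl
  obtain ⟨i, hi, hxi⟩ := mem_iUnion₂.1 hcl
  exact mem_iUnion₂.2 ⟨i, hi, hxi, fun h => hint (interior_mono (subset_biUnion_of_mem hi) h)⟩

theorem frontier_accumulate_subset {X : Type*} [TopologicalSpace X] (f : ℕ → Set X) (k : ℕ) :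
    frontier (accumulate f k) ⊆ ⋃ j, frontier (f j) :=
  ((finite_Iic k).frontier_biUnion_subset f).trans (iUnion₂_subset_iUnion _ _)

theorem frontier_disjointed_subset {X : Type*} [TopologicalSpace X] (f : ℕ → Set X) (k : ℕ) :
    frontier (disjointed f k) ⊆ ⋃ j, frontier (f j) := by
  rw [disjointed_apply, Finset.sup_set_eq_biUnion, sdiff_eq]
  refine (frontier_inter_subset _ _).trans (union_subset ?_ ?_)
  · exact inter_subset_left.trans (subset_iUnion (fun j => frontier (f j)) k)
  · rw [frontier_compl]
    exact inter_subset_right.trans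
      (((Finset.Iio k).finite_toSet.frontier_biUnion_subset f).trans (iUnion₂_subset_iUnion _ _))

theorem exists_ball_cover_null_frontier {X : Type*} [PseudoMetricSpace X]
    [TopologicalSpace.SeparableSpace X] [Nonempty X] [MeasurableSpace X] [OpensMeasurableSpace X]
    (μ : Measure X) [SFinite μ] {δ : ℝ} (hδ : 0 < δ) :
    ∃ B : ℕ → Set X, (∀ m, IsOpen (B m)) ∧ (⋃ m, B m) = univ ∧
      (∀ m, μ (frontier (B m)) = 0) ∧ ∀ m, ∀ z ∈ B m, ∀ t ∈ B m, dist z t < δ := by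
  obtain ⟨u, hu⟩ := TopologicalSpace.exists_dense_seq X
  have hrad : ∀ m, ∃ r ∈ Ioo (δ / 3) (δ / 2), μ (frontier (Metric.ball (u m) r)) = 0 := by
    intro m
    obtain ⟨r, hr, hr0⟩ := exists_null_frontier_thickening μ {u m} (by linarith : δ / 3 < δ / 2)
    exact ⟨r, hr, by rwa [Metric.thickening_singleton] at hr0⟩
  choose r hr hrnull using hrad
  refine ⟨fun m => Metric.ball (u m) (r m), fun m => Metric.isOpen_ball,
    eq_univ_of_forall fun x => ?_, hrnull, fun m z hz t ht => ?_⟩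
  · obtain ⟨m, hm⟩ := hu.exists_dist_lt x (by linarith : (0 : ℝ) < δ / 3)
    exact mem_iUnion.2 ⟨m, Metric.mem_ball.2 (hm.trans (hr m).1)⟩
  · calc dist z t ≤ dist z (u m) + dist t (u m) := dist_triangle_right _ _ _
      _ < r m + r m := add_lt_add hz ht
      _ < δ := by linarith [(hr m).2]

theorem exists_finite_partition_null_frontier {X : Type*} [PseudoMetricSpace X]
    [TopologicalSpace.SeparableSpace X] [Nonempty X] [MeasurableSpace X] [OpensMeasurableSpace X]
    (μ : Measure X) [IsFiniteMeasure μ] {δ : ℝ} (hδ : 0 < δ) {η : ℝ≥0∞} (hη : 0 < η) :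
    ∃ (k : ℕ) (A : Option (Fin k) → Set X), (∀ j, MeasurableSet (A j)) ∧
      Pairwise (Disjoint on A) ∧ (⋃ j, A j) = univ ∧ (∀ j, μ (frontier (A j)) = 0) ∧
      (∀ m, ∀ z ∈ A (some m), ∀ t ∈ A (some m), dist z t < δ) ∧ μ (A none) < η := by
  obtain ⟨B, hBo, hBcover, hBfr, hBsmall⟩ := exists_ball_cover_null_frontier μ hδ
  have hBmeas : ∀ m, MeasurableSet (B m) := fun m => (hBo m).measurableSet
  have hN : μ (⋃ j, frontier (B j)) = 0 := measure_iUnion_null hBfr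
  have hAcc : ∀ k, MeasurableSet (accumulate B k) := fun k =>
    MeasurableSet.iUnion fun j => MeasurableSet.iUnion fun _ => hBmeas j
  obtain ⟨k, hk⟩ : ∃ k, μ (accumulate B k)ᶜ < η := by
    have hlim := tendsto_measure_iInter_atTop (μ := μ) (s := fun k => (accumulate B k)ᶜ)
      (fun k => (hAcc k).compl.nullMeasurableSet)
      (fun _ _ hkl => compl_subset_compl.2 (monotone_accumulate hkl)) ⟨0, measure_ne_top μ _⟩
    rw [← compl_iUnion, iUnion_accumulate, hBcover, compl_univ, measure_empty] at hlim
    exact (hlim.eventually (gt_mem_nhds hη)).exists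
  refine ⟨k + 1, fun j => j.elim (accumulate B k)ᶜ fun m => disjointed B m, ?_, ?_, ?_, ?_, ?_, hk⟩
  · rintro (_ | m)
    · exact (hAcc k).compl
    · exact MeasurableSet.disjointed hBmeas m
  · have hsub : ∀ m : Fin (k + 1), disjointed B m ⊆ accumulate B k := fun m =>
      (disjointed_subset B m).trans fun x hx => mem_accumulate.2 ⟨m, Nat.lt_succ_iff.1 m.2, hx⟩
    rintro (_ | m) (_ | l) hml
    · exact absurd rfl hml
    · exact disjoint_compl_left.mono_right (hsub l)
    · exact (disjoint_compl_left.mono_right (hsub m)).symm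
    · exact disjoint_disjointed B fun h => hml (congrArg some (Fin.ext h))
  · refine eq_univ_of_forall fun x => ?_
    by_cases hx : x ∈ accumulate B k
    · rw [← partialSups_eq_accumulate, ← partialSups_disjointed, partialSups_eq_accumulate,
        mem_accumulate] at hx
      obtain ⟨m, hm, hxm⟩ := hx
      exact mem_iUnion.2 ⟨some ⟨m, Nat.lt_succ_of_le hm⟩, hxm⟩
    · exact mem_iUnion.2 ⟨none, hx⟩
  · rintro (_ | m) <;> refine measure_mono_null ?_ hN
    · exact (frontier_compl _).subset.trans (frontier_accumulate_subset B k)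
    · exact frontier_disjointed_subset B m
  · exact fun m z hz t ht => hBsmall m z (disjointed_subset B m hz) t (disjointed_subset B m ht)

section Integrals

variable {X E : Type*} [MeasurableSpace X] [NormedAddCommGroup E] [NormedSpace ℝ E]
  [CompleteSpace E]

theorem norm_setIntegral_sub_setIntegral_le {μ ν : Measure X} [IsFiniteMeasure μ]
    [IsFiniteMeasure ν] {g : X → E} {A : Set X} (hgμ : IntegrableOn g A μ)
    (hgν : IntegrableOn g A ν) {C w : ℝ} (hC : ∀ z ∈ A, ‖g z‖ ≤ C)
    (hw : ∀ z ∈ A, ∀ t ∈ A, ‖g z - g t‖ ≤ w) :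
    ‖∫ z in A, g z ∂ν - ∫ z in A, g z ∂μ‖ ≤
      w * (ν.real A + μ.real A) + C * |ν.real A - μ.real A| := by
  rcases A.eq_empty_or_nonempty with rfl | ⟨x, hx⟩
  · simp
  have hsplit : ∀ θ : Measure X, IsFiniteMeasure θ → IntegrableOn g A θ →
      ∫ z in A, g z ∂θ = ∫ z in A, (g z - g x) ∂θ + θ.real A • g x := fun θ _ hg => by
    rw [integral_sub hg (integrable_const _), setIntegral_const, sub_add_cancel]
  have hosc : ∀ θ : Measure X, IsFiniteMeasure θ →
      ‖∫ z in A, (g z - g x) ∂θ‖ ≤ w * θ.real A := fun θ _ =>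
    norm_setIntegral_le_of_norm_le_const (measure_lt_top θ A) fun z hz => hw z hz x hx
  rw [hsplit ν ‹_› hgν, hsplit μ ‹_› hgμ, add_sub_add_comm, ← sub_smul]
  calc _ ≤ ‖∫ z in A, (g z - g x) ∂ν‖ + ‖∫ z in A, (g z - g x) ∂μ‖
          + ‖(ν.real A - μ.real A) • g x‖ :=
        (norm_add_le _ _).trans (by gcongr; exact norm_sub_le _ _)
    _ ≤ w * ν.real A + w * μ.real A + |ν.real A - μ.real A| * C := by
      rw [norm_smul, Real.norm_eq_abs]
      gcongr
      exacts [hosc ν ‹_›, hosc μ ‹_›, hC x hx]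
    _ = _ := by ring

variable {J : Type*} {A : J → Set X}

theorem sum_measureReal_le_one (hA : ∀ j, MeasurableSet (A j)) (hdisj : Pairwise (Disjoint on A))
    (μ : Measure X) [IsProbabilityMeasure μ] (s : Finset J) : ∑ j ∈ s, μ.real (A j) ≤ 1 := by
  rw [← measureReal_biUnion_finset (hdisj.set_pairwise _) fun j _ => hA j]
  exact measureReal_le_one

theorem norm_integral_sub_integral_le_of_partition [Fintype J] [DecidableEq J]
    (hA : ∀ j, MeasurableSet (A j)) (hdisj : Pairwise (Disjoint on A)) (hcover : ⋃ j, A j = univ)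
    (μ ν : Measure X) [IsProbabilityMeasure μ] [IsProbabilityMeasure ν]
    {g : X → E} (hg : StronglyMeasurable g) {C ε : ℝ} (hC : ∀ z t, ‖g z - g t‖ ≤ C) (hε : 0 ≤ ε)
    (G : Finset J) (hG : ∀ j ∈ G, ∀ z ∈ A j, ∀ t ∈ A j, ‖g z - g t‖ ≤ ε) :
    ‖∫ z, g z ∂ν - ∫ z, g z ∂μ‖ ≤
      2 * ε + 2 * C * (μ.real (⋃ j ∈ Gᶜ, A j) + ∑ j, |ν.real (A j) - μ.real (A j)|) := by
  obtain ⟨x₀⟩ := nonempty_of_isProbabilityMeasure μ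
  set h : X → E := fun z => g z - g x₀
  set Δ : J → E := fun j => ∫ z in A j, h z ∂ν - ∫ z in A j, h z ∂μ
  set d : J → ℝ := fun j => |ν.real (A j) - μ.real (A j)|
  have hC₀ : 0 ≤ C := (norm_nonneg _).trans (hC x₀ x₀)
  have hh : ∀ z, ‖h z‖ ≤ C := fun z => hC z x₀
  have hint : ∀ θ : Measure X, IsProbabilityMeasure θ → Integrable h θ := fun θ _ =>
    .of_bound (hg.sub stronglyMeasurable_const).aestronglyMeasurable C (.of_forall hh)
  have hsplit : ∀ θ : Measure X, IsProbabilityMeasure θ →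
      ∫ z, g z ∂θ = ∑ j, ∫ z in A j, h z ∂θ + g x₀ := by
    intro θ _
    calc ∫ z, g z ∂θ = ∫ z, (h z + g x₀) ∂θ := by simp [h]
      _ = _ := by
        rw [integral_add (hint θ ‹_›) (integrable_const _), integral_const, probReal_univ,
          one_smul, ← integral_iUnion_fintype hA hdisj fun j => (hint θ ‹_›).integrableOn,
          hcover, setIntegral_univ]
  have hgood : ∀ j ∈ G, ‖Δ j‖ ≤ ε * (ν.real (A j) + μ.real (A j)) + 2 * C * d j := fun j hj =>
    (norm_setIntegral_sub_setIntegral_le (hint μ ‹_›).integrableOn (hint ν ‹_›).integrableOn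
      (fun z _ => hh z) fun z hz t ht => by simpa [h] using hG j hj z hz t ht).trans
      (by gcongr; linarith [abs_nonneg (ν.real (A j) - μ.real (A j))])
  have hbad : ∀ j, ‖Δ j‖ ≤ 2 * C * μ.real (A j) + 2 * C * d j := fun j => by
    refine (norm_setIntegral_sub_setIntegral_le (hint μ ‹_›).integrableOn (hint ν ‹_›).integrableOn
      (fun z _ => hh z) fun z _ t _ => by simpa [h] using hC z t).trans ?_
    nlinarith [le_abs_self (ν.real (A j) - μ.real (A j))]
  have hΔ : ∫ z, g z ∂ν - ∫ z, g z ∂μ = ∑ j, Δ j := by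
    rw [hsplit ν ‹_›, hsplit μ ‹_›, add_sub_add_right_eq_sub, Finset.sum_sub_distrib]
  have hmass : μ.real (⋃ j ∈ Gᶜ, A j) = ∑ j ∈ Gᶜ, μ.real (A j) :=
    measureReal_biUnion_finset (hdisj.set_pairwise _) fun j _ => hA j
  rw [hΔ, hmass, ← Finset.sum_add_sum_compl G d]
  calc ‖∑ j, Δ j‖ ≤ ∑ j ∈ G, ‖Δ j‖ + ∑ j ∈ Gᶜ, ‖Δ j‖ :=
        (norm_sum_le _ _).trans (Finset.sum_add_sum_compl G _).ge
    _ ≤ ∑ j ∈ G, (ε * (ν.real (A j) + μ.real (A j)) + 2 * C * d j)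
          + ∑ j ∈ Gᶜ, (2 * C * μ.real (A j) + 2 * C * d j) :=
        add_le_add (Finset.sum_le_sum hgood) (Finset.sum_le_sum fun j _ => hbad j)
    _ = ε * (∑ j ∈ G, ν.real (A j) + ∑ j ∈ G, μ.real (A j))
          + 2 * C * (∑ j ∈ Gᶜ, μ.real (A j) + (∑ j ∈ G, d j + ∑ j ∈ Gᶜ, d j)) := by
        simp only [Finset.sum_add_distrib, ← Finset.mul_sum]; ring
    _ ≤ ε * (1 + 1) + 2 * C * (∑ j ∈ Gᶜ, μ.real (A j) + (∑ j ∈ G, d j + ∑ j ∈ Gᶜ, d j)) := by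
        gcongr <;> exact sum_measureReal_le_one hA hdisj _ G
    _ = _ := by ring

end Integrals

theorem tendsto_sum_abs_measureReal_sub {Ω ι J : Type*} [MeasurableSpace Ω] [TopologicalSpace Ω]
    [OpensMeasurableSpace Ω] [HasOuterApproxClosed Ω] [Fintype J] {L : Filter ι}
    {μ : ProbabilityMeasure Ω} {μs : ι → ProbabilityMeasure Ω} (hμs : Tendsto μs L (𝓝 μ))
    {A : J → Set Ω} (hA : ∀ j, (μ : Measure Ω) (frontier (A j)) = 0) :
    Tendsto (fun i => ∑ j, |(μs i : Measure Ω).real (A j) - (μ : Measure Ω).real (A j)|)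
      L (𝓝 0) := by
  rw [show (0 : ℝ) = ∑ j : J, |(μ : Measure Ω).real (A j) - (μ : Measure Ω).real (A j)| by simp]
  exact tendsto_finsetSum _ fun j _ => (((ENNReal.tendsto_toReal (measure_ne_top _ _)).comp
    (ProbabilityMeasure.tendsto_measure_of_null_frontier_of_tendsto' hμs (hA j))).sub_const _).abs

section Oscillation

variable {H E : Type*} [SeminormedAddCommGroup H] [SeminormedAddCommGroup E] {S : Set H}

noncomputable def ballOscillation (f : S → E) (δ : ℝ) (x : S) : ℝ :=
  ⨆ z : {z : S // ‖(z : H) - x‖ < δ}, ⨆ t : {t : S // ‖(t : H) - x‖ < δ}, ‖f z - f t‖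

theorem norm_sub_le_ballOscillation {f : S → E} {C : ℝ} (hC : ∀ z t, ‖f z - f t‖ ≤ C) {δ : ℝ}
    {x z t : S} (hz : ‖(z : H) - x‖ < δ) (ht : ‖(t : H) - x‖ < δ) :
    ‖f z - f t‖ ≤ ballOscillation f δ x :=
  le_ciSup_of_le ⟨C, forall_mem_range.2 fun z' =>
      Real.iSup_le (fun t' => hC z' t') ((norm_nonneg _).trans (hC z z))⟩ ⟨z, hz⟩
    (le_ciSup_of_le ⟨C, forall_mem_range.2 fun t' => hC z t'⟩ ⟨t, ht⟩ le_rfl)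

theorem subset_setOf_le_ballOscillation {f : S → E} {C : ℝ} (hC : ∀ z t, ‖f z - f t‖ ≤ C)
    {δ ε : ℝ} {A : Set S} (hA : ∀ z ∈ A, ∀ t ∈ A, dist z t < δ)
    (hε : ∃ z ∈ A, ∃ t ∈ A, ε ≤ ‖f z - f t‖) : A ⊆ {x | ε ≤ ballOscillation f δ x} := by
  obtain ⟨z, hz, t, ht, hzt⟩ := hε
  intro x hx
  have hdist : ∀ y ∈ A, ‖(y : H) - x‖ < δ := fun y hy => by
    simpa only [Subtype.dist_eq, dist_eq_norm] using hA y hy x hx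
  exact hzt.trans (norm_sub_le_ballOscillation hC (hdist z hz) (hdist t ht))

theorem measureReal_biUnion_oscillating_le {k : ℕ} {A : Option (Fin k) → Set S} {δ : ℝ}
    (hA : ∀ m, ∀ z ∈ A (some m), ∀ t ∈ A (some m), dist z t < δ) {f : S → E} {C : ℝ}
    (hC : ∀ z t, ‖f z - f t‖ ≤ C) {ε η : ℝ} (hη : 0 ≤ η) [MeasurableSpace S] (μ : Measure S)
    (hrem : μ (A none) < ENNReal.ofReal η)
    (hosc : μ {x | ε ≤ ballOscillation f δ x} < ENNReal.ofReal η)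
    (G : Finset (Option (Fin k)))
    (hG : ∀ j ∈ Gᶜ, ∃ z ∈ A j, ∃ t ∈ A j, ε < ‖f z - f t‖) :
    μ.real (⋃ j ∈ Gᶜ, A j) ≤ 2 * η := by
  have hsub : ⋃ j ∈ Gᶜ, A j ⊆ A none ∪ {x | ε ≤ ballOscillation f δ x} := by
    refine iUnion₂_subset fun j hj => ?_
    rcases j with _ | m
    · exact subset_union_left
    · obtain ⟨z, hz, t, ht, hzt⟩ := hG _ hj
      exact (subset_setOf_le_ballOscillation hC (hA m) ⟨z, hz, t, ht, hzt.le⟩).trans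
        subset_union_right
  have hlt := ((measure_mono hsub).trans (measure_union_le _ _)).trans_lt
    (ENNReal.add_lt_add hrem hosc)
  rw [← ENNReal.ofReal_add hη hη, ← two_mul] at hlt
  exact ENNReal.toReal_le_of_le_ofReal (by positivity) hlt.le

end Oscillation

theorem stmt10_general {H : Type*} [NormedAddCommGroup H] [InnerProductSpace ℝ H]
    [CompleteSpace H] [SecondCountableTopology H] [MeasurableSpace H] [BorelSpace H]
    (S : Set H)
    {ι : Type*} (F : ι → S → H) (hFmeas : ∀ i, Measurable (F i))
    -- (i) the family is uniformly bounded in diameter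
    (C : ℝ) (hbd : ∀ i, ∀ z t : S, ‖F i z - F i t‖ ≤ C)
    (P : ProbabilityMeasure S) (Pn : ℕ → ProbabilityMeasure S)
    -- (ii) the oscillation condition: for every `ε > 0`,
    -- `lim_{δ → 0⁺} sup_i P {x : ω_{F i}(B(x, δ)) ≥ ε} = 0`
    (hosc : ∀ ε : ℝ, 0 < ε →
      Tendsto (fun δ : ℝ => ⨆ i, (P : Measure S)
          {x : S | ε ≤ ⨆ z : {z : S // ‖(z : H) - (x : H)‖ < δ},
              ⨆ t : {t : S // ‖(t : H) - (x : H)‖ < δ}, ‖F i (z : S) - F i (t : S)‖})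
        (𝓝[>] (0 : ℝ)) (𝓝 0))
    (hweak : Tendsto Pn atTop (𝓝 P)) :
    ∀ ε : ℝ, 0 < ε → ∀ᶠ n in atTop, ∀ i,
      ‖(∫ z, F i z ∂(Pn n : Measure S)) - ∫ z, F i z ∂(P : Measure S)‖ < ε := by
  intro ε hε
  have hne : Nonempty S := nonempty_of_isProbabilityMeasure (P : Measure S)
  obtain ⟨η, hη, hηε⟩ := exists_pos_mul_lt (by positivity : 0 < ε / 2) (6 * C)
  obtain ⟨δ, hbad, hδ⟩ := (((hosc (ε / 4) (by positivity)).eventually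
    (gt_mem_nhds (ENNReal.ofReal_pos.2 hη))).and self_mem_nhdsWithin).exists
  obtain ⟨k, A, hA, hdisj, hcover, hfront, hsmall, hrem⟩ :=
    exists_finite_partition_null_frontier (P : Measure S) hδ (ENNReal.ofReal_pos.2 hη)
  filter_upwards [(tendsto_sum_abs_measureReal_sub hweak hfront).eventually (gt_mem_nhds hη)]
    with n hn i
  classical
  have hC₀ : 0 ≤ C := (norm_nonneg _).trans (hbd i hne.some hne.some)
  set G := Finset.univ.filter fun j => ∀ z ∈ A j, ∀ t ∈ A j, ‖F i z - F i t‖ ≤ ε / 4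
  have hD : (P : Measure S).real (⋃ j ∈ Gᶜ, A j) ≤ 2 * η :=
    measureReal_biUnion_oscillating_le hsmall (hbd i) hη.le _ hrem
      ((le_iSup _ i).trans_lt hbad) G fun j hj => by simpa [G] using hj
  calc _ ≤ 2 * (ε / 4) + 2 * C * ((P : Measure S).real (⋃ j ∈ Gᶜ, A j)
          + ∑ j, |(Pn n : Measure S).real (A j) - (P : Measure S).real (A j)|) :=
        norm_integral_sub_integral_le_of_partition hA hdisj hcover _ _
          (hFmeas i).stronglyMeasurable (hbd i) (by positivity) G
          fun j hj => (Finset.mem_filter.1 hj).2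
    _ ≤ 2 * (ε / 4) + 2 * C * (2 * η + η) := by gcongr
    _ < ε := by linarith

/-- Billingsley–Topsøe theorem (sufficiency direction): a uniformly bounded family of
measurable functions whose oscillation on small balls is uniformly small in `P`-measure
satisfies the uniform convergence of Bochner integrals along any weakly convergent
sequence of probability measures. -/
theorem stmt10 {H : Type*} [NormedAddCommGroup H] [InnerProductSpace ℝ H]
    [CompleteSpace H] [SecondCountableTopology H] [MeasurableSpace H] [BorelSpace H]
    (S : Set H) (hS : MeasurableSet S)
    {ι : Type*} (F : ι → S → H) (hFmeas : ∀ i, Measurable (F i))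
    -- (i) the family is uniformly bounded in diameter
    (C : ℝ) (hbd : ∀ i, ∀ z t : S, ‖F i z - F i t‖ ≤ C)
    (P : ProbabilityMeasure S) (Pn : ℕ → ProbabilityMeasure S)
    -- (ii) the oscillation condition: for every `ε > 0`,
    -- `lim_{δ → 0⁺} sup_i P {x : ω_{F i}(B(x, δ)) ≥ ε} = 0`
    (hosc : ∀ ε : ℝ, 0 < ε →
      Tendsto (fun δ : ℝ => ⨆ i, (P : Measure S)
          {x : S | ε ≤ ⨆ z : {z : S // ‖(z : H) - (x : H)‖ < δ},
              ⨆ t : {t : S // ‖(t : H) - (x : H)‖ < δ}, ‖F i (z : S) - F i (t : S)‖})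
        (𝓝[>] (0 : ℝ)) (𝓝 0))
    (hweak : Tendsto Pn atTop (𝓝 P)) :
    ∀ ε : ℝ, 0 < ε → ∀ᶠ n in atTop, ∀ i,
      ‖(∫ z, F i z ∂(Pn n : Measure S)) - ∫ z, F i z ∂(P : Measure S)‖ < ε :=
  stmt10_general S F hFmeas C hbd P Pn hosc hweak
end

section
/- With a_k = 4^{−k} (2k+1) · C(2k, k), where C(2k, k) is the central binomial coefficient, one has lim_{k → ∞} a_k² / (2k+1) = 2/π. Equivalently, the asymptotic relative efficiency of the median of medians relative to the full-sample median, lim_{n→∞} V(θ̂)/V(θ̃^{RFM}) = lim_k (m g_Y(θ)²)/(n f_X(θ)²) with n = m(2k+1) and g_Y(θ) = (1/2)^{2k}((2k+1)!/(k!)²) f_X(θ), equals 2/π. -/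
open Filter Topology Real

lemma choose_cast_eq (k : ℕ) :
    ((2 * k).choose k : ℝ) = ((2 * k).factorial : ℝ) / ((k.factorial : ℝ))^2 := by
  have h := Nat.choose_mul_factorial_mul_factorial (show k ≤ 2 * k by omega)
  have h2 : 2 * k - k = k := by omega
  rw [h2] at h
  have hk : ((k.factorial : ℝ)) ≠ 0 := Nat.cast_ne_zero.mpr k.factorial_ne_zero
  field_simp [pow_two]
  push_cast [← h]
  ring

lemma main_lim :
    Tendsto (fun k : ℕ =>
        (((4 : ℝ) ^ k)⁻¹ * (2 * (k : ℝ) + 1) * ((2 * k).choose k : ℝ)) ^ 2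
          / (2 * (k : ℝ) + 1))
      atTop (𝓝 (2 / π)) := by
  have h : Tendsto (fun k => (Real.Wallis.W k)⁻¹) atTop (𝓝 (π/2)⁻¹) :=
    Real.Wallis.tendsto_W_nhds_pi_div_two.inv₀ (by positivity)
  have heq : (fun k : ℕ =>
      (((4 : ℝ) ^ k)⁻¹ * (2 * (k : ℝ) + 1) * ((2 * k).choose k : ℝ)) ^ 2
        / (2 * (k : ℝ) + 1)) = fun k => (Real.Wallis.W k)⁻¹ := by
    funext k
    rw [Real.Wallis.W_eq_factorial_ratio, choose_cast_eq]
    have hk : ((k.factorial : ℝ)) ≠ 0 := Nat.cast_ne_zero.mpr k.factorial_ne_zero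
    have h2k : (((2*k).factorial : ℝ)) ≠ 0 := Nat.cast_ne_zero.mpr (2*k).factorial_ne_zero
    have hp : (0:ℝ) < 2 * (k:ℝ) + 1 := by positivity
    rw [show ((2:ℝ) ^ (4 * k)) = ((4:ℝ)^k)^2 by
      rw [show 4 * k = 2 * k * 2 by ring, pow_mul, pow_mul]
      norm_num]
    field_simp
  rw [heq, show (2:ℝ)/π = (π/2)⁻¹ by rw [inv_div]]
  exact h

theorem stmt12 :
    Tendsto (fun k : ℕ =>
        (((4 : ℝ) ^ k)⁻¹ * (2 * (k : ℝ) + 1) * ((2 * k).choose k : ℝ)) ^ 2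
          / (2 * (k : ℝ) + 1))
      atTop (𝓝 (2 / π)) ∧
    ∀ fX : ℝ, 0 < fX →
      Tendsto (fun k : ℕ =>
          (((1 : ℝ) / 2) ^ (2 * k) * (((2 * k + 1).factorial : ℝ) / ((k.factorial : ℝ)) ^ 2)
              * fX) ^ 2 / ((2 * (k : ℝ) + 1) * fX ^ 2))
        atTop (𝓝 (2 / π)) := by
  refine ⟨main_lim, fun fX hfX => ?_⟩
  have heq : (fun k : ℕ =>
      (((1 : ℝ) / 2) ^ (2 * k) * (((2 * k + 1).factorial : ℝ) / ((k.factorial : ℝ)) ^ 2)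
          * fX) ^ 2 / ((2 * (k : ℝ) + 1) * fX ^ 2)) =
      (fun k : ℕ =>
        (((4 : ℝ) ^ k)⁻¹ * (2 * (k : ℝ) + 1) * ((2 * k).choose k : ℝ)) ^ 2
          / (2 * (k : ℝ) + 1)) := by
    funext k
    have hfact : (((2 * k + 1).factorial : ℝ)) = (2 * (k:ℝ) + 1) * ((2*k).factorial : ℝ) := by
      rw [Nat.factorial_succ]; push_cast; ring
    have hhalf : ((1:ℝ)/2) ^ (2 * k) = ((4:ℝ)^k)⁻¹ := by
      rw [div_pow, one_pow, pow_mul]; norm_num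
    rw [choose_cast_eq, hfact, hhalf]
    have hk : ((k.factorial : ℝ)) ≠ 0 := Nat.cast_ne_zero.mpr k.factorial_ne_zero
    have hp : (0:ℝ) < 2 * (k:ℝ) + 1 := by positivity
    field_simp
  rw [heq]
  exact main_lim
end

section
/- Let a > 1, b > 1 and n > 0 be real numbers, and define f : (0, ∞) → ℝ by f(l) = n·l^{a−1} + n^b·l^{−b} (corresponding to the total cost m·l^a + m^b of computing m = n/l subsample estimators of cost l^a each plus a fusion step of cost m^b). Then f attains a unique global minimum on (0, ∞) at l* = (b/(a−1))^{1/(a+b−1)} · n^{(b−1)/(a+b−1)}; in particular, the optimal subsample size satisfies l* = O(n^{(b−1)/(a+b−1)}). -/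
open Real

lemma core_ineq (b c t : ℝ) (hb : 0 < b) (hc : 0 < c) (ht : 0 < t) (htne : t ≠ 1) :
    b + c < b * t ^ c + c * t ^ (-b) := by
  have hlog : Real.log t ≠ 0 := by
    intro h
    rcases (Real.log_eq_zero).1 h with h1 | h1 | h1 <;> simp_all <;> try linarith
  have h1 : t ^ c = Real.exp (Real.log t * c) := Real.rpow_def_of_pos ht c
  have h2 : t ^ (-b) = Real.exp (Real.log t * (-b)) := Real.rpow_def_of_pos ht (-b)
  have e1 : Real.log t * c + 1 < Real.exp (Real.log t * c) :=
    Real.add_one_lt_exp (mul_ne_zero hlog hc.ne')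
  have e2 : Real.log t * (-b) + 1 < Real.exp (Real.log t * (-b)) :=
    Real.add_one_lt_exp (mul_ne_zero hlog (neg_ne_zero.2 hb.ne'))
  rw [h1, h2]
  nlinarith [mul_lt_mul_of_pos_left e1 hb, mul_lt_mul_of_pos_left e2 hc]

theorem stmt14 (a b n : ℝ) (ha : 1 < a) (hb : 1 < b) (hn : 0 < n)
    (f : ℝ → ℝ) (hf : ∀ l : ℝ, 0 < l → f l = n * l ^ (a - 1) + n ^ b * l ^ (-b))
    (lstar : ℝ)
    (hlstar : lstar = (b / (a - 1)) ^ ((1 : ℝ) / (a + b - 1)) * n ^ ((b - 1) / (a + b - 1))) :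
    0 < lstar ∧
    (∀ l : ℝ, 0 < l → f lstar ≤ f l) ∧
    (∀ l : ℝ, 0 < l → f l = f lstar → l = lstar) := by
  set c := a - 1 with hcdef
  have hc0 : 0 < c := by simp [hcdef]; linarith
  have hb0 : 0 < b := by linarith
  have hcb : 0 < c + b := by linarith
  have hcbne : c + b ≠ 0 := ne_of_gt hcb
  have habc : a + b - 1 = c + b := by simp [hcdef]; ring
  have hbc : 0 < b / c := div_pos hb0 hc0
  rw [habc] at hlstar
  have hl0 : 0 < lstar := by
    rw [hlstar]
    exact mul_pos (rpow_pos_of_pos hbc _) (rpow_pos_of_pos hn _)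
  -- key identity: lstar ^ (c+b) = (b/c) * n^(b-1)
  have hkey : lstar ^ (c + b) = (b / c) * n ^ (b - 1) := by
    rw [hlstar, mul_rpow (le_of_lt (rpow_pos_of_pos hbc _)) (le_of_lt (rpow_pos_of_pos hn _)),
        ← Real.rpow_mul hbc.le, ← Real.rpow_mul hn.le, one_div, inv_mul_cancel₀ hcbne,
        div_mul_cancel₀ _ hcbne, Real.rpow_one]
  have e1 : lstar ^ c = lstar ^ (c + b) * lstar ^ (-b) := by
    rw [← Real.rpow_add hl0]; ring_nf
  have hAB : n * lstar ^ c = (b / c) * (n ^ b * lstar ^ (-b)) := by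
    rw [e1, hkey]
    have e2 : n ^ b = n * n ^ (b - 1) := by
      rw [show b = 1 + (b - 1) by ring, Real.rpow_add hn, Real.rpow_one]; ring_nf
    rw [e2]; ring
  set B := n ^ b * lstar ^ (-b) with hBdef
  have hB0 : 0 < B := mul_pos (rpow_pos_of_pos hn _) (rpow_pos_of_pos hl0 _)
  have hflstar : f lstar = (B / c) * (b + c) := by
    rw [hf lstar hl0, hAB]; field_simp; ring
  have hfl : ∀ l : ℝ, 0 < l → f l = (B / c) * (b * (l / lstar) ^ c + c * (l / lstar) ^ (-b)) := by
    intro l hl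
    have ht0 : 0 < l / lstar := div_pos hl hl0
    have hlt : l = lstar * (l / lstar) := by field_simp
    rw [hf l hl, hlt, Real.mul_rpow hl0.le ht0.le, Real.mul_rpow hl0.le ht0.le,
        ← mul_assoc, ← mul_assoc, hAB]
    field_simp; ring
  have hstrict : ∀ l : ℝ, 0 < l → l ≠ lstar → f lstar < f l := by
    intro l hl hne
    have ht0 : 0 < l / lstar := div_pos hl hl0
    have htne : l / lstar ≠ 1 := by
      intro h
      apply hne
      field_simp at h
      exact h
    rw [hflstar, hfl l hl]
    have := core_ineq b c (l / lstar) hb0 hc0 ht0 htne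
    have hBc : 0 < B / c := div_pos hB0 hc0
    exact mul_lt_mul_of_pos_left this hBc
  refine ⟨hl0, ?_, ?_⟩
  · intro l hl
    rcases eq_or_ne l lstar with h | h
    · rw [h]
    · exact le_of_lt (hstrict l hl h)
  · intro l hl hfeq
    by_contra h
    exact absurd hfeq (ne_of_gt (hstrict l hl h))
end
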